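/- Let ∇ be an A-anisotropic connection on a smooth manifold M, let v ∈ A, let Ω ⊂ M be an open neighbourhood of p = π(v), and let V ∈ 𝔛(Ω) be any A-admissible vector field extending v. Then for all vector fields X, Y, Z ∈ 𝔛(Ω), the curvature tensor R of ∇ satisfies R_v(X,Y)Z = (R^V)_p(X,Y)Z − (P_V)_p(Y, Z, ∇^V_X V) + (P_V)_p(X, Z, ∇^V_Y V), where R^V is the curvature tensor of the affine connection ∇^V on Ω and P is the vertical derivative of ∇. -/

import Mathlib

open Set
open scoped Topology

noncomputable section

/-! ## Chart model for the anisotropic tensor calculus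

The manifold is (a chart of) a finite-dimensional real vector space `E`, its
tangent bundle is `E × E` with projection `Prod.fst` (so a point of `TM` is
`v = (v.1, v.2)` with `π v = v.1`), vector fields are maps `E → E`, smooth
functions and fields are `ContDiff ℝ ⊤`, and `A ⊆ E × E` is the open set of
admissible directions. -/

variable {E : Type*} [NormedAddCommGroup E] [NormedSpace ℝ E]

/-- Lie bracket of vector fields in the chart model. -/
def lieB (X Y : E → E) : E → E := fun p => fderiv ℝ Y p (X p) - fderiv ℝ X p (Y p)

/-- Constant vector field. -/
def cv (x : E) : E → E := fun _ => x

/-- Vertical derivative of an anisotropic vector field `𝒴`. -/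
def vdiff (𝒴 : E × E → E) (v : E × E) (z : E) : E :=
  deriv (fun t : ℝ => 𝒴 (v.1, v.2 + t • z)) 0

/-- Vertical derivative `∂^ν T` of a pointwise anisotropic `(1,2)`-tensor. -/
def vd12 (T : E × E → E → E → E) (v : E × E) (x y b : E) : E :=
  deriv (fun t : ℝ => T (v.1, v.2 + t • b) x y) 0

/-- Vertical derivative `∂^ν T` of a pointwise anisotropic `(1,3)`-tensor. -/
def vd13 (T : E × E → E → E → E → E) (v : E × E) (x y z b : E) : E :=
  deriv (fun t : ℝ => T (v.1, v.2 + t • b) x y z) 0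

/-- An `A`-anisotropic (linear) connection (Definition 2.2 of the paper), in the
chart model: a map `(v, X, Y) ↦ ∇^v_X Y ∈ T_{π(v)}M = E`, additive and Leibniz in
`Y`, `𝓕(M)`-linear in `X`, and smooth in `v ∈ A` for fixed smooth `X, Y`. -/
structure AnisoConn (A : Set (E × E)) : Type _ where
  conn : E × E → (E → E) → (E → E) → E
  add_right : ∀ v ∈ A, ∀ X Y Z : E → E,
    conn v X (fun p => Y p + Z p) = conn v X Y + conn v X Z
  leibniz : ∀ v ∈ A, ∀ f : E → ℝ, ContDiff ℝ (⊤ : ℕ∞) f → ∀ X Y : E → E,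
    conn v X (fun p => f p • Y p)
      = fderiv ℝ f v.1 (X v.1) • Y v.1 + f v.1 • conn v X Y
  base_linear : ∀ v ∈ A, ∀ (f h : E → ℝ) (X Y Z : E → E),
    conn v (fun p => f p • X p + h p • Y p) Z
      = f v.1 • conn v X Z + h v.1 • conn v Y Z
  smooth_conn : ∀ X Y : E → E, ContDiff ℝ (⊤ : ℕ∞) X → ContDiff ℝ (⊤ : ℕ∞) Y →
    ContDiffOn ℝ (⊤ : ℕ∞) (fun v => conn v X Y) A

namespace AnisoConn

variable {A : Set (E × E)} (D : AnisoConn A)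

/-- Pointwise Christoffel operator `Γ_v(x,y) = ∇^v_{x}y` (on constant fields). -/
def Γ (v : E × E) (x y : E) : E := D.conn v (cv x) (cv y)

/-- The affine connection `∇^V` induced by an admissible extension `V`. -/
def connV (V : E → E) (X Y : E → E) : E → E := fun p => D.conn (p, V p) X Y

/-- Curvature tensor `R^V` of the affine connection `∇^V`. -/
def RV (V : E → E) (X Y Z : E → E) : E → E := fun p =>
  D.connV V X (D.connV V Y Z) p - D.connV V Y (D.connV V X Z) p
    - D.connV V (lieB X Y) Z p

/-- Canonical derivative `∇^v_X 𝒴` of an anisotropic vector field `𝒴`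
(eq. (12) of the paper, computed with the constant extension of `v`). -/
def dAniso (v : E × E) (X : E → E) (𝒴 : E × E → E) : E :=
  D.conn v X (fun p => 𝒴 (p, v.2)) - vdiff 𝒴 v (D.conn v X (cv v.2))

/-- Curvature tensor of the anisotropic connection, on vector fields. -/
def R (v : E × E) (X Y Z : E → E) : E :=
  D.dAniso v X (fun w => D.conn w Y Z) - D.dAniso v Y (fun w => D.conn w X Z)
    - D.conn v (lieB X Y) Z

/-- Curvature tensor, pointwise on tangent vectors. -/
def Rt (v : E × E) (u w z : E) : E := D.R v (cv u) (cv w) (cv z)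

/-- Vertical derivative `P` of the connection, on vector fields. -/
def P (v : E × E) (X Y : E → E) (z : E) : E :=
  deriv (fun t : ℝ => D.conn (v.1, v.2 + t • z) X Y) 0

/-- Vertical derivative `P` of the connection, pointwise. -/
def Pt (v : E × E) (x y z : E) : E := D.P v (cv x) (cv y) z

/-- Torsion of the connection, on vector fields. -/
def tors (v : E × E) (X Y : E → E) : E := D.conn v X Y - D.conn v Y X - lieB X Y v.1

/-- Torsion of the connection, pointwise. -/
def torst (v : E × E) (x y : E) : E := D.Γ v x y - D.Γ v y x

/-- Torsion-free anisotropic connection. -/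
def IsTorsionFree : Prop :=
  ∀ v ∈ A, ∀ X Y : E → E, ContDiff ℝ (⊤ : ℕ∞) X → ContDiff ℝ (⊤ : ℕ∞) Y →
    D.tors v X Y = 0

/-- Anisotropic tensor derivative `(∇_u T)_v` of a pointwise scalar-valued
anisotropic `(0,2)`-tensor (formulas (4) and (6) of the paper, computed with
the canonical constant extension of `v`). -/
def dT02 (T : E × E → E → E → ℝ) (v : E × E) (u x y : E) : ℝ :=
  fderiv ℝ (fun q => T (q, v.2) x y) v.1 u
    - deriv (fun t : ℝ => T (v.1, v.2 + t • D.Γ v u v.2) x y) 0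
    - T v (D.Γ v u x) y - T v x (D.Γ v u y)

/-- Anisotropic tensor derivative `(∇_u T)_v` of a pointwise `(1,2)`-tensor. -/
def dT12 (T : E × E → E → E → E) (v : E × E) (u x y : E) : E :=
  fderiv ℝ (fun q => T (q, v.2) x y) v.1 u
    - deriv (fun t : ℝ => T (v.1, v.2 + t • D.Γ v u v.2) x y) 0
    - T v (D.Γ v u x) y - T v x (D.Γ v u y)

/-- Anisotropic tensor derivative `(∇_u T)_v` of a pointwise `(1,3)`-tensor. -/
def dT13 (T : E × E → E → E → E → E) (v : E × E) (u x y z : E) : E :=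
  fderiv ℝ (fun q => T (q, v.2) x y z) v.1 u
    - deriv (fun t : ℝ => T (v.1, v.2 + t • D.Γ v u v.2) x y z) 0
    - T v (D.Γ v u x) y z - T v x (D.Γ v u y) z - T v x y (D.Γ v u z)

/-- Anisotropic tensor derivative of a pointwise `(0,s)`-tensor. -/
def dT0 {s : ℕ} (T : E × E → (Fin s → E) → ℝ) (v : E × E) (u : E) (x : Fin s → E) : ℝ :=
  fderiv ℝ (fun q => T (q, v.2) x) v.1 u
    - deriv (fun t : ℝ => T (v.1, v.2 + t • D.Γ v u v.2) x) 0
    - ∑ j, T v (Function.update x j (D.Γ v u (x j)))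

/-- Anisotropic tensor derivative of a pointwise `(1,s)`-tensor. -/
def dT1 {s : ℕ} (T : E × E → (Fin s → E) → E) (v : E × E) (u : E) (x : Fin s → E) : E :=
  fderiv ℝ (fun q => T (q, v.2) x) v.1 u
    - deriv (fun t : ℝ => T (v.1, v.2 + t • D.Γ v u v.2) x) 0
    - ∑ j, T v (Function.update x j (D.Γ v u (x j)))

/-- Covariant derivative `D^v_γ X` along a curve `γ`, induced by the connection. -/
def Dcurve (γ : ℝ → E) (v : E × E) (X : ℝ → E) (t₀ : ℝ) : E :=
  deriv X t₀ + D.Γ v (deriv γ t₀) (X t₀)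

/-- Auto-parallel (A-admissible) curve on `[a,b]` : `D^{γ̇}_γ γ̇ = 0`. -/
def IsAutoParallel (γ : ℝ → E) (a b : ℝ) : Prop :=
  ∀ t ∈ Icc a b, (γ t, deriv γ t) ∈ A ∧
    D.Dcurve γ (γ t, deriv γ t) (deriv γ) t = 0

/-- A Jacobi field along `γ` : the variational field of a variation of `γ`
all of whose longitudinal curves are auto-parallel. -/
def IsJacobiField (γ : ℝ → E) (a b : ℝ) (J : ℝ → E) : Prop :=
  ∃ ε > (0 : ℝ), ∃ Λ : ℝ → ℝ → E,
    ContDiff ℝ (⊤ : ℕ∞) (fun q : ℝ × ℝ => Λ q.1 q.2) ∧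
    (∀ t, Λ t 0 = γ t) ∧
    (∀ s ∈ Ioo (-ε) ε, D.IsAutoParallel (fun r => Λ r s) a b) ∧
    ∀ t ∈ Icc a b, J t = deriv (fun s => Λ t s) 0

/-- Covariant `t`-derivative `D^{γ̇_s}_{γ_s} U` of a field `U` along a
two-parameter map `Λ`, in the direction of the velocities of the longitudinal
curves. -/
def Dt2 (Λ U : ℝ → ℝ → E) (t s : ℝ) : E :=
  deriv (fun r => U r s) t
    + D.Γ (Λ t s, deriv (fun r => Λ r s) t) (deriv (fun r => Λ r s) t) (U t s)

/-- Covariant `s`-derivative `D^{γ̇_s}_{β_t} U` of a field `U` along a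
two-parameter map `Λ`. -/
def Ds2 (Λ U : ℝ → ℝ → E) (t s : ℝ) : E :=
  deriv (fun r => U t r) s
    + D.Γ (Λ t s, deriv (fun r => Λ r s) t) (deriv (fun r => Λ t r) s) (U t s)

end AnisoConn

/-- The fundamental tensor `g_v` of a pseudo-Finsler metric `L`. -/
def fundTensor (L : E × E → ℝ) (v : E × E) (u w : E) : ℝ :=
  (1 / 2) * deriv (fun t : ℝ => deriv (fun s : ℝ => L (v.1, v.2 + t • u + s • w)) 0) 0

/-- The Cartan tensor `C_v` of a pseudo-Finsler metric `L`. -/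
def cartan (L : E × E → ℝ) (v : E × E) (w₁ w₂ w₃ : E) : ℝ :=
  (1 / 4) * deriv (fun s₃ : ℝ => deriv (fun s₂ : ℝ =>
      deriv (fun s₁ : ℝ => L (v.1, v.2 + s₁ • w₁ + s₂ • w₂ + s₃ • w₃)) 0) 0) 0

/-- A pseudo-Finsler metric on a conic open subset `A ⊆ TM ∖ 0`. -/
structure IsPseudoFinsler (A : Set (E × E)) (L : E × E → ℝ) : Prop where
  isOpen : IsOpen A
  proj_surj : ∀ p : E, ∃ y : E, (p, y) ∈ A
  not_zero : ∀ v ∈ A, v.2 ≠ (0 : E)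
  conic : ∀ v ∈ A, ∀ lam : ℝ, 0 < lam → (v.1, lam • v.2) ∈ A
  smooth : ContDiffOn ℝ (⊤ : ℕ∞) L A
  homogeneous : ∀ v ∈ A, ∀ lam : ℝ, 0 < lam → L (v.1, lam • v.2) = lam ^ 2 * L v
  nondeg : ∀ v ∈ A, ∀ u : E, (∀ w : E, fundTensor L v u w = 0) → u = 0

/-- The Levi-Civita–Chern connection of `L` : torsion-free and `∇g = 0`. -/
def IsLCChern {A : Set (E × E)} (L : E × E → ℝ) (D : AnisoConn A) : Prop :=
  D.IsTorsionFree ∧ ∀ v ∈ A, ∀ u w z : E, D.dT02 (fundTensor L) v u w z = 0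

/-- The property `∇̂ g = 𝒬` for an anisotropic connection. -/
def MetricDeriv {A : Set (E × E)} (L : E × E → ℝ) (D : AnisoConn A)
    (QT : E × E → E → E → E → ℝ) : Prop :=
  ∀ v ∈ A, ∀ u w z : E, D.dT02 (fundTensor L) v u w z = QT v u w z

/-- An `A`-anisotropic `(0,3)`-tensor : pointwise multilinear and smooth in `v`. -/
def IsAnisoTensor03 (A : Set (E × E)) (QT : E × E → E → E → E → ℝ) : Prop :=
  (∀ v ∈ A, ∀ (c : ℝ) (x x' y z : E),
      QT v (c • x + x') y z = c * QT v x y z + QT v x' y z) ∧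
  (∀ v ∈ A, ∀ (c : ℝ) (x y y' z : E),
      QT v x (c • y + y') z = c * QT v x y z + QT v x y' z) ∧
  (∀ v ∈ A, ∀ (c : ℝ) (x y z z' : E),
      QT v x y (c • z + z') = c * QT v x y z + QT v x y z') ∧
  ∀ x y z : E, ContDiffOn ℝ (⊤ : ℕ∞) (fun v => QT v x y z) A

/-- Symmetry of an anisotropic `(0,3)`-tensor. -/
def Symm03 (A : Set (E × E)) (QT : E × E → E → E → E → ℝ) : Prop :=
  ∀ v ∈ A, ∀ x y z : E, QT v x y z = QT v y x z ∧ QT v x y z = QT v x z y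

/-- The affine connection with Christoffel operator `Γb` in the chart model. -/
def affConn (Γb : E → E → E → E) (X Y : E → E) : E → E :=
  fun p => fderiv ℝ Y p (X p) + Γb p (X p) (Y p)

/-- The curvature tensor of the affine connection with Christoffel operator `Γb`. -/
def affR (Γb : E → E → E → E) (X Y Z : E → E) : E → E := fun p =>
  affConn Γb X (affConn Γb Y Z) p - affConn Γb Y (affConn Γb X Z) p
    - affConn Γb (lieB X Y) Z p

/-! In a chart, `∇^v_X W = dW_{π v}(X) + ∇^v_X (W (π v))` for every field `W` smooth near `π v`,
where `W (π v)` is read as a constant field: expand `W` in a basis and apply the Leibniz rule.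
Applied to `p ↦ 𝒴 (p, V p)` and to `V` itself, this shows that the expression defining
`∇^v_X 𝒴` takes the same value for every admissible extension `V` of `v`, the vertical derivative
of `𝒴` absorbing the extra term `dV(X)`. Computing both covariant derivatives in `R_v` with the
extension `V` turns them into derivatives for `∇^V` plus the two `P`-terms. -/

theorem ContDiff.smul_of_tsupport_subset {F : Type*} [NormedAddCommGroup F] [NormedSpace ℝ F]
    {n : WithTop ℕ∞} {χ : E → ℝ} {W : E → F} {U : Set E} (hU : IsOpen U)
    (hχ : ContDiff ℝ n χ) (hsupp : tsupport χ ⊆ U) (hW : ContDiffOn ℝ n W U) :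
    ContDiff ℝ n (fun p => χ p • W p) := by
  refine contDiff_iff_contDiffAt.2 fun p => ?_
  by_cases hp : p ∈ U
  · exact hχ.contDiffAt.smul (hW.contDiffAt (hU.mem_nhds hp))
  · have hχp : χ =ᶠ[𝓝 p] 0 := notMem_tsupport_iff_eventuallyEq.1 fun h => hp (hsupp h)
    refine contDiffAt_const (c := (0 : F)).congr_of_eventuallyEq ?_
    filter_upwards [hχp] with q hq
    simp [hq]

theorem vdiff_eq_fderiv {𝒴 : E × E → E} {v : E × E} (h𝒴 : DifferentiableAt ℝ 𝒴 v) (z : E) :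
    vdiff 𝒴 v z = fderiv ℝ 𝒴 v (0, z) := by
  have hline : HasDerivAt (fun t : ℝ => ((v.1, v.2 + t • z) : E × E)) (0, z) 0 :=
    (hasDerivAt_const 0 v.1).prodMk
      (by simpa using ((hasDerivAt_id (0 : ℝ)).smul_const z).const_add v.2)
  have h𝒴' : HasFDerivAt 𝒴 (fderiv ℝ 𝒴 v) ((v.1, v.2 + (0 : ℝ) • z) : E × E) := by
    simpa using h𝒴.hasFDerivAt
  exact (h𝒴'.comp_hasDerivAt 0 hline).deriv

namespace AnisoConn

variable {A : Set (E × E)} (D : AnisoConn A) {v : E × E}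

theorem conn_smul (hv : v ∈ A) (X : E → E) (c : ℝ) (W : E → E) :
    D.conn v X (c • W) = c • D.conn v X W := by
  show D.conn v X (fun p => c • W p) = _
  simpa using D.leibniz v hv (fun _ => c) contDiff_const X W

def connLinearMap (hv : v ∈ A) (X : E → E) : (E → E) →ₗ[ℝ] E where
  toFun := D.conn v X
  map_add' := D.add_right v hv X
  map_smul' := D.conn_smul hv X

theorem conn_eq_fderiv_add [FiniteDimensional ℝ E] (hv : v ∈ A) (X : E → E) {W : E → E}
    (hW : ContDiff ℝ (⊤ : ℕ∞) W) :
    D.conn v X W = fderiv ℝ W v.1 (X v.1) + D.conn v X (cv (W v.1)) := by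
  let b := Module.finBasis ℝ E
  let g : Fin (Module.finrank ℝ E) → E → ℝ := fun i p => b.equivFunL (W p) i
  have hg : ∀ i, ContDiff ℝ (⊤ : ℕ∞) (g i) := fun i =>
    contDiff_pi.1 (b.equivFunL.contDiff.comp hW) i
  have hexpand : ∀ w : E, ∑ i, b.equivFunL w i • b i = w := b.sum_equivFun
  have hgW : ∀ i, fderiv ℝ (g i) v.1 (X v.1) = b.equivFunL (fderiv ℝ W v.1 (X v.1)) i := by
    intro i
    have hWd : DifferentiableAt ℝ W v.1 := hW.differentiable (by simp) v.1
    exact DFunLike.congr_fun (((ContinuousLinearMap.proj (R := ℝ) (φ := fun _ => ℝ) i).comp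
      (b.equivFunL : E →L[ℝ] _)).hasFDerivAt.comp v.1 hWd.hasFDerivAt).fderiv (X v.1)
  calc D.conn v X W = D.connLinearMap hv X (∑ i, fun p => g i p • b i) := by
        simp only [Finset.sum_fn, g, hexpand]; rfl
    _ = ∑ i, (fderiv ℝ (g i) v.1 (X v.1) • b i + g i v.1 • D.conn v X (cv (b i))) := by
        rw [map_sum]
        exact Finset.sum_congr rfl fun i _ => D.leibniz v hv (g i) (hg i) X (cv (b i))
    _ = fderiv ℝ W v.1 (X v.1) + D.connLinearMap hv X (∑ i, g i v.1 • cv (b i)) := by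
        simp only [Finset.sum_add_distrib, map_sum, map_smul, hgW, hexpand]; rfl
    _ = fderiv ℝ W v.1 (X v.1) + D.conn v X (cv (W v.1)) := by
        have hcv : ∑ i, g i v.1 • cv (b i) = cv (W v.1) := by
          funext p
          simp only [Finset.sum_apply, Pi.smul_apply, cv, g, hexpand]
        rw [hcv]
        rfl

theorem conn_eq_fderiv_add_of_contDiffOn [FiniteDimensional ℝ E] (hv : v ∈ A) (X : E → E)
    {W : E → E} {U : Set E} (hU : IsOpen U) (hvU : v.1 ∈ U) (hW : ContDiffOn ℝ (⊤ : ℕ∞) W U) :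
    D.conn v X W = fderiv ℝ W v.1 (X v.1) + D.conn v X (cv (W v.1)) := by
  -- Compare the Leibniz rule for `χ • W`, `χ` a bump at `v.1`, with the global formula for it.
  obtain ⟨χ, hχU, -, hχ, -, hχv⟩ := exists_contDiff_tsupport_subset (n := ⊤) (hU.mem_nhds hvU)
  have hχW := D.conn_eq_fderiv_add hv X (hχ.smul_of_tsupport_subset hU hχU hW)
  have hWv : DifferentiableAt ℝ W v.1 :=
    (hW.contDiffAt (hU.mem_nhds hvU)).differentiableAt (by simp)
  rw [D.leibniz v hv χ hχ X W, fderiv_fun_smul (hχ.differentiable (by simp) v.1) hWv] at hχW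
  simp only [hχv, one_smul, add_apply, ContinuousLinearMap.smulRight_apply] at hχW
  rw [add_comm (fderiv ℝ W v.1 (X v.1)), add_assoc] at hχW
  exact add_left_cancel hχW

theorem conn_comp_sub_vdiff [FiniteDimensional ℝ E] (hA : IsOpen A) (hv : v ∈ A)
    {Ω : Set E} (hΩ : IsOpen Ω) (hvΩ : v.1 ∈ Ω) {V : E → E} (hV : ContDiffOn ℝ (⊤ : ℕ∞) V Ω)
    (hVv : V v.1 = v.2) (hVA : ∀ p ∈ Ω, (p, V p) ∈ A) (X : E → E) {𝒴 : E × E → E}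
    (h𝒴 : ContDiffOn ℝ (⊤ : ℕ∞) 𝒴 A) :
    D.conn v X (fun p => 𝒴 (p, V p)) - vdiff 𝒴 v (D.conn v X V)
      = fderiv ℝ 𝒴 v (X v.1, 0) + D.conn v X (cv (𝒴 v))
        - fderiv ℝ 𝒴 v (0, D.conn v X (cv v.2)) := by
  obtain ⟨p, y⟩ := v
  dsimp only at hvΩ hVv ⊢
  subst hVv
  have h𝒴d : DifferentiableAt ℝ 𝒴 (p, V p) :=
    (h𝒴.contDiffAt (hA.mem_nhds hv)).differentiableAt (by simp)
  have hVd : DifferentiableAt ℝ V p :=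
    (hV.contDiffAt (hΩ.mem_nhds hvΩ)).differentiableAt (by simp)
  have hcomp : HasFDerivAt (fun q => 𝒴 (q, V q))
      ((fderiv ℝ 𝒴 (p, V p)).comp ((ContinuousLinearMap.id ℝ E).prod (fderiv ℝ V p))) p :=
    h𝒴d.hasFDerivAt.comp p ((hasFDerivAt_id p).prodMk hVd.hasFDerivAt)
  rw [D.conn_eq_fderiv_add_of_contDiffOn (W := fun q => 𝒴 (q, V q)) hv X hΩ hvΩ
      (h𝒴.comp (contDiffOn_id.prodMk hV) hVA),
    D.conn_eq_fderiv_add_of_contDiffOn hv X hΩ hvΩ hV, hcomp.fderiv, vdiff_eq_fderiv h𝒴d]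
  have hsplit : ∀ a b c : E, fderiv ℝ 𝒴 (p, V p) (a, b) - fderiv ℝ 𝒴 (p, V p) (0, b + c)
      = fderiv ℝ 𝒴 (p, V p) (a, 0) - fderiv ℝ 𝒴 (p, V p) (0, c) := by
    intro a b c
    rw [← map_sub, ← map_sub]
    congr 1
    ext <;> simp
  rw [ContinuousLinearMap.comp_apply, ContinuousLinearMap.prod_apply, ContinuousLinearMap.id_apply,
    add_sub_right_comm, hsplit, add_sub_right_comm]

theorem dAniso_eq_of_extension [FiniteDimensional ℝ E] (hA : IsOpen A) (hv : v ∈ A)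
    {Ω : Set E} (hΩ : IsOpen Ω) (hvΩ : v.1 ∈ Ω) {V : E → E} (hV : ContDiffOn ℝ (⊤ : ℕ∞) V Ω)
    (hVv : V v.1 = v.2) (hVA : ∀ p ∈ Ω, (p, V p) ∈ A) (X : E → E) {𝒴 : E × E → E}
    (h𝒴 : ContDiffOn ℝ (⊤ : ℕ∞) 𝒴 A) :
    D.dAniso v X 𝒴 = D.conn v X (fun p => 𝒴 (p, V p)) - vdiff 𝒴 v (D.conn v X V) := by
  rw [D.conn_comp_sub_vdiff hA hv hΩ hvΩ hV hVv hVA X h𝒴]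
  exact D.conn_comp_sub_vdiff (Ω := (fun p => (p, v.2)) ⁻¹' A) (V := cv v.2) hA hv
    (hA.preimage (by fun_prop)) hv contDiffOn_const rfl (fun _ hp => hp) X h𝒴

end AnisoConn

theorem stmt_0_general [FiniteDimensional ℝ E] {A : Set (E × E)}
    (hA : IsOpen A)
    (D : AnisoConn A) (v : E × E) (hv : v ∈ A)
    (Ω : Set E) (hΩ : IsOpen Ω) (hpΩ : v.1 ∈ Ω)
    (V : E → E) (hVsm : ContDiffOn ℝ (⊤ : ℕ∞) V Ω) (hVext : V v.1 = v.2)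
    (hVadm : ∀ p ∈ Ω, (p, V p) ∈ A)
    (X Y Z : E → E) (hX : ContDiff ℝ (⊤ : ℕ∞) X) (hY : ContDiff ℝ (⊤ : ℕ∞) Y)
    (hZ : ContDiff ℝ (⊤ : ℕ∞) Z) :
    D.R v X Y Z
      = D.RV V X Y Z v.1
        - D.P v Y Z (D.connV V X V v.1)
        + D.P v X Z (D.connV V Y V v.1) := by
  have hvV : ((v.1, V v.1) : E × E) = v := by rw [hVext]
  rw [AnisoConn.R,
    D.dAniso_eq_of_extension hA hv hΩ hpΩ hVsm hVext hVadm X (D.smooth_conn Y Z hY hZ),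
    D.dAniso_eq_of_extension hA hv hΩ hpΩ hVsm hVext hVadm Y (D.smooth_conn X Z hX hZ)]
  unfold AnisoConn.RV AnisoConn.connV AnisoConn.P vdiff
  rw [hvV]
  abel

/-- Proposition 2.8, eq. (10) of the paper: for any
`A`-admissible extension `V` of `v` on an open neighbourhood `Ω` of `π(v)`,
`R_v(X,Y)Z = (R^V)_p(X,Y)Z - (P_V)_p(Y,Z,∇^V_X V) + (P_V)_p(X,Z,∇^V_Y V)`. -/
theorem stmt_0 [FiniteDimensional ℝ E] {A : Set (E × E)}
    (hA : IsOpen A) (hAproj : ∀ p : E, ∃ y : E, (p, y) ∈ A)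
    (D : AnisoConn A) (v : E × E) (hv : v ∈ A)
    (Ω : Set E) (hΩ : IsOpen Ω) (hpΩ : v.1 ∈ Ω)
    (V : E → E) (hVsm : ContDiffOn ℝ (⊤ : ℕ∞) V Ω) (hVext : V v.1 = v.2)
    (hVadm : ∀ p ∈ Ω, (p, V p) ∈ A)
    (X Y Z : E → E) (hX : ContDiff ℝ (⊤ : ℕ∞) X) (hY : ContDiff ℝ (⊤ : ℕ∞) Y)
    (hZ : ContDiff ℝ (⊤ : ℕ∞) Z) :
    D.R v X Y Z
      = D.RV V X Y Z v.1
        - D.P v Y Z (D.connV V X V v.1)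
        + D.P v X Z (D.connV V Y V v.1) :=
  stmt_0_general hA D v hv Ω hΩ hpΩ V hVsm hVext hVadm X Y Z hX hY hZ
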